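/- arXiv:1511.09296 — 3 statements merged into one kernel-verified Lean document; each statement's English description precedes it below -/
import Mathlib

section
/- Let S : O(Ω) → [0,∞] be an increasing set function on the open subsets of a metric space Ω (i.e. S(A) ≤ S(B) whenever A ⊆ B are open) satisfying: (a) S(∅) = 0; (b) S is superadditive, i.e. S(A ∪ B) ≥ S(A) + S(B) for all disjoint open A, B; (c) S is subadditive, i.e. S(A ∪ B) ≤ S(A) + S(B) for all open A, B; (d) there is a finite Radon measure ν on Ω with S(A) ≤ ν(A) for all open A. Then S extends uniquely to a finite positive Radon (Borel) measure on Ω, i.e. there is a unique finite positive Borel measure λ on Ω with λ(A) = S(A) for every open A ⊆ Ω, and this measure λ is absolutely continuous with respect to ν. -/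
open MeasureTheory Set ENNReal

/-!
The extension is the outer measure `E ↦ ⨅ {S U | U open, E ⊆ U}`. Domination by `ν`, which is
outer regular, upgrades the finite subadditivity of `S` to countable subadditivity on open sets, so
this outer measure agrees with `S` on open sets. Two metrically separated sets have disjoint open
neighbourhoods, and superadditivity of `S` on these makes the outer measure metric, so all Borel
sets are Carathéodory measurable. The resulting measure is at most `ν` by outer regularity of `ν`;
it is unique because finite measures on a metric space are outer regular, hence determined by
their values on open sets.
-/

theorem Metric.AreSeparated.separatedNhds {X : Type*} [PseudoEMetricSpace X] {s t : Set X}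
    (h : AreSeparated s t) : SeparatedNhds s t := by
  obtain ⟨r, hr0, hr⟩ := h
  have hr2 : 0 < r / 2 := ENNReal.half_pos hr0
  refine ⟨⋃ x ∈ s, eball x (r / 2), ⋃ y ∈ t, eball y (r / 2),
    isOpen_biUnion fun _ _ => isOpen_eball, isOpen_biUnion fun _ _ => isOpen_eball,
    fun x hx => mem_biUnion hx (mem_eball_self hr2),
    fun y hy => mem_biUnion hy (mem_eball_self hr2), ?_⟩
  simp only [disjoint_iUnion_left, disjoint_iUnion_right]
  intro y hy x hx
  refine Set.disjoint_left.2 fun z hzx hzy => (hr x hx y hy).not_gt ?_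
  calc edist x y ≤ edist z x + edist z y := edist_triangle_left x y z
    _ < r / 2 + r / 2 := ENNReal.add_lt_add (mem_eball.1 hzx) (mem_eball.1 hzy)
    _ = r := ENNReal.add_halves r

namespace DeGiorgiLetta

section TopologicalSpace

variable {Ω : Type*} [TopologicalSpace Ω] {S : Set Ω → ℝ≥0∞}

theorem isOpen_accumulate {U : ℕ → Set Ω} (hU : ∀ n, IsOpen (U n)) (N : ℕ) :
    IsOpen (accumulate U N) := by
  rw [accumulate_def]
  exact isOpen_biUnion fun n _ => hU n

theorem accumulate_le_sum (hsub : ∀ A B : Set Ω, IsOpen A → IsOpen B → S (A ∪ B) ≤ S A + S B)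
    {U : ℕ → Set Ω} (hU : ∀ n, IsOpen (U n)) (N : ℕ) :
    S (accumulate U N) ≤ ∑ n ∈ Finset.range (N + 1), S (U n) := by
  induction N with
  | zero => simp
  | succ N ih =>
    rw [accumulate_succ, Finset.sum_range_succ]
    exact (hsub _ _ (isOpen_accumulate hU N) (hU _)).trans (add_le_add_left ih _)

theorem iUnion_le_tsum [MeasurableSpace Ω] [OpensMeasurableSpace Ω]
    (ν : Measure Ω) [IsFiniteMeasure ν] [ν.OuterRegular]
    (hmono : ∀ A B : Set Ω, IsOpen A → IsOpen B → A ⊆ B → S A ≤ S B)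
    (hsub : ∀ A B : Set Ω, IsOpen A → IsOpen B → S (A ∪ B) ≤ S A + S B)
    (hdom : ∀ A : Set Ω, IsOpen A → S A ≤ ν A)
    {U : ℕ → Set Ω} (hU : ∀ n, IsOpen (U n)) :
    S (⋃ n, U n) ≤ ∑' n, S (U n) := by
  refine ENNReal.le_of_forall_pos_le_add fun ε hε _ => ?_
  have htail :
      Filter.Tendsto (fun N => ν ((⋃ n, U n) \ accumulate U N)) .atTop (nhds 0) := by
    have := tendsto_measure_iInter_atTop (μ := ν)
      (fun N => ((isOpen_iUnion hU).measurableSet.diff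
        (isOpen_accumulate hU N).measurableSet).nullMeasurableSet)
      (fun M N hMN => sdiff_subset_sdiff_right (monotone_accumulate hMN))
      ⟨0, measure_ne_top ν _⟩
    rwa [← sdiff_iUnion, iUnion_accumulate, sdiff_self, measure_empty] at this
  obtain ⟨N, hN⟩ := (htail.eventually (gt_mem_nhds (ENNReal.coe_pos.2 hε))).exists
  -- an open set `W` of small `ν`-measure, hence of small `S`-value, covers the tail
  obtain ⟨W, hW, hWo, hνW⟩ := Set.exists_isOpen_lt_of_lt _ _ hN
  calc S (⋃ n, U n) ≤ S (accumulate U N ∪ W) :=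
        hmono _ _ (isOpen_iUnion hU) ((isOpen_accumulate hU N).union hWo) fun x hx =>
          (em (x ∈ accumulate U N)).imp id fun h => hW ⟨hx, h⟩
    _ ≤ S (accumulate U N) + S W := hsub _ _ (isOpen_accumulate hU N) hWo
    _ ≤ ∑ n ∈ Finset.range (N + 1), S (U n) + ν W :=
        add_le_add (accumulate_le_sum hsub hU N) (hdom W hWo)
    _ ≤ ∑' n, S (U n) + ε := add_le_add (ENNReal.sum_le_tsum _) hνW.le

variable (S) in
noncomputable def outerMeasure (hempty : S ∅ = 0) : OuterMeasure Ω :=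
  inducedOuterMeasure (fun U (_ : IsOpen U) => S U) isOpen_empty hempty

variable {hempty : S ∅ = 0}

theorem outerMeasure_le_of_subset {E U : Set Ω} (hU : IsOpen U) (hEU : E ⊆ U) :
    outerMeasure S hempty E ≤ S U :=
  (measure_mono hEU).trans <| le_inducedOuterMeasure.1 le_rfl U hU

theorem outerMeasure_eq_iInf
    (hmono : ∀ A B : Set Ω, IsOpen A → IsOpen B → A ⊆ B → S A ≤ S B)
    (hσ : ∀ U : ℕ → Set Ω, (∀ n, IsOpen (U n)) → S (⋃ n, U n) ≤ ∑' n, S (U n)) (E : Set Ω) :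
    outerMeasure S hempty E = ⨅ (U : Set Ω) (_ : IsOpen U) (_ : E ⊆ U), S U :=
  inducedOuterMeasure_eq_iInf (fun _ => isOpen_iUnion) (fun _ hU => hσ _ hU)
    (fun _ _ hA hB => hmono _ _ hA hB) E

theorem outerMeasure_of_isOpen
    (hmono : ∀ A B : Set Ω, IsOpen A → IsOpen B → A ⊆ B → S A ≤ S B)
    (hσ : ∀ U : ℕ → Set Ω, (∀ n, IsOpen (U n)) → S (⋃ n, U n) ≤ ∑' n, S (U n))
    {U : Set Ω} (hU : IsOpen U) : outerMeasure S hempty U = S U :=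
  inducedOuterMeasure_eq' (fun _ => isOpen_iUnion) (fun _ hU => hσ _ hU)
    (fun _ _ hA hB => hmono _ _ hA hB) hU

theorem outerMeasure_le_measure [MeasurableSpace Ω] (ν : Measure Ω) [ν.OuterRegular]
    (hdom : ∀ A : Set Ω, IsOpen A → S A ≤ ν A) (E : Set Ω) : outerMeasure S hempty E ≤ ν E :=
  le_of_forall_gt fun r hr =>
    let ⟨U, hEU, hU, hνU⟩ := E.exists_isOpen_lt_of_lt r hr
    ((outerMeasure_le_of_subset hU hEU).trans (hdom U hU)).trans_lt hνU

end TopologicalSpace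

theorem isMetric_outerMeasure {Ω : Type*} [EMetricSpace Ω] {S : Set Ω → ℝ≥0∞}
    {hempty : S ∅ = 0}
    (hmono : ∀ A B : Set Ω, IsOpen A → IsOpen B → A ⊆ B → S A ≤ S B)
    (hsuper : ∀ A B : Set Ω, IsOpen A → IsOpen B → Disjoint A B → S A + S B ≤ S (A ∪ B))
    (hσ : ∀ U : ℕ → Set Ω, (∀ n, IsOpen (U n)) → S (⋃ n, U n) ≤ ∑' n, S (U n)) :
    (outerMeasure S hempty).IsMetric := by
  intro s t hst
  refine le_antisymm (measure_union_le s t) ?_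
  obtain ⟨A, B, hA, hB, hsA, htB, hAB⟩ := hst.separatedNhds
  rw [outerMeasure_eq_iInf hmono hσ (s ∪ t)]
  refine le_iInf₂ fun V hV => le_iInf fun hstV => ?_
  calc outerMeasure S hempty s + outerMeasure S hempty t ≤ S (V ∩ A) + S (V ∩ B) :=
        add_le_add
          (outerMeasure_le_of_subset (hV.inter hA)
            (subset_inter (subset_union_left.trans hstV) hsA))
          (outerMeasure_le_of_subset (hV.inter hB)
            (subset_inter (subset_union_right.trans hstV) htB))
    _ ≤ S (V ∩ A ∪ V ∩ B) :=
        hsuper _ _ (hV.inter hA) (hV.inter hB) (hAB.mono inter_subset_right inter_subset_right)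
    _ ≤ S V := hmono _ _ ((hV.inter hA).union (hV.inter hB)) hV
        (union_subset inter_subset_left inter_subset_left)

end DeGiorgiLetta

open DeGiorgiLetta

theorem deGiorgi_letta_general
    {Ω : Type*} [MetricSpace Ω] [MeasurableSpace Ω] [BorelSpace Ω]
    (S : Set Ω → ℝ≥0∞)
    -- `ν` is a finite Radon measure on `Ω`
    (ν : Measure Ω) [IsFiniteMeasure ν]
    -- `S` is increasing
    (hmono : ∀ A B : Set Ω, IsOpen A → IsOpen B → A ⊆ B → S A ≤ S B)
    -- (a)
    (hempty : S ∅ = 0)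
    -- (b) `S` is superadditive
    (hsuper : ∀ A B : Set Ω, IsOpen A → IsOpen B → Disjoint A B → S A + S B ≤ S (A ∪ B))
    -- (c) `S` is subadditive
    (hsub : ∀ A B : Set Ω, IsOpen A → IsOpen B → S (A ∪ B) ≤ S A + S B)
    -- (d) `S` is dominated by `ν`
    (hdom : ∀ A : Set Ω, IsOpen A → S A ≤ ν A) :
    ∃ lam : Measure Ω, IsFiniteMeasure lam ∧
      (∀ A : Set Ω, IsOpen A → lam A = S A) ∧
      lam ≪ ν ∧
      ∀ lam' : Measure Ω, IsFiniteMeasure lam' →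
        (∀ A : Set Ω, IsOpen A → lam' A = S A) → lam' = lam := by
  have hσ := fun (U : ℕ → Set Ω) (hU : ∀ n, IsOpen (U n)) => iUnion_le_tsum ν hmono hsub hdom hU
  have hcar : ‹MeasurableSpace Ω› ≤ (outerMeasure S hempty).caratheodory := by
    rw [BorelSpace.measurable_eq (α := Ω)]
    exact (isMetric_outerMeasure hmono hsuper hσ).borel_le_caratheodory
  set lam := (outerMeasure S hempty).toMeasure hcar
  have hlam_open (A : Set Ω) (hA : IsOpen A) : lam A = S A :=
    (toMeasure_apply _ _ hA.measurableSet).trans (outerMeasure_of_isOpen hmono hσ hA)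
  have hle : lam ≤ ν := Measure.le_iff.2 fun E hE =>
    (toMeasure_apply _ _ hE).trans_le (outerMeasure_le_measure ν hdom E)
  have : IsFiniteMeasure lam := isFiniteMeasure_of_le ν hle
  exact ⟨lam, this, hlam_open, Measure.absolutelyContinuous_of_le hle, fun lam' _ hlam' =>
    Measure.OuterRegular.ext_isOpen fun U hU => (hlam' U hU).trans (hlam_open U hU).symm⟩

/-- De Giorgi–Letta lemma. An increasing set function `S` on the open subsets of
a metric space `Ω`, with `S(∅) = 0`, superadditive on disjoint open sets, subadditive on open
sets, and dominated by a finite Radon measure `ν`, extends uniquely to a finite positive Borel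
measure on `Ω`, which is moreover absolutely continuous with respect to `ν`. -/
theorem deGiorgi_letta
    {Ω : Type*} [MetricSpace Ω] [MeasurableSpace Ω] [BorelSpace Ω]
    (S : Set Ω → ℝ≥0∞)
    -- `ν` is a finite Radon measure on `Ω`
    (ν : Measure Ω) [IsFiniteMeasure ν] [ν.InnerRegular] [ν.OuterRegular]
    -- `S` is increasing
    (hmono : ∀ A B : Set Ω, IsOpen A → IsOpen B → A ⊆ B → S A ≤ S B)
    -- (a)
    (hempty : S ∅ = 0)
    -- (b) `S` is superadditive
    (hsuper : ∀ A B : Set Ω, IsOpen A → IsOpen B → Disjoint A B → S A + S B ≤ S (A ∪ B))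
    -- (c) `S` is subadditive
    (hsub : ∀ A B : Set Ω, IsOpen A → IsOpen B → S (A ∪ B) ≤ S A + S B)
    -- (d) `S` is dominated by `ν`
    (hdom : ∀ A : Set Ω, IsOpen A → S A ≤ ν A) :
    ∃ lam : Measure Ω, IsFiniteMeasure lam ∧
      (∀ A : Set Ω, IsOpen A → lam A = S A) ∧
      lam ≪ ν ∧
      ∀ lam' : Measure Ω, IsFiniteMeasure lam' →
        (∀ A : Set Ω, IsOpen A → lam' A = S A) → lam' = lam :=
  deGiorgi_letta_general S ν hmono hempty hsuper hsub hdom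
end

section
/- Assume (X,d,μ) is a (G,(h_t)_{t>0})-metric measure space which is meshable and asymptotically periodic with respect to a class 𝔖(X) ⊆ B_0(X), and let S : B_0(X) → [0,∞] be a subadditive, G-invariant set function such that S(A) ≤ c·μ(A) for all A ∈ B_0(X) and some constant c > 0. Then for every Q ∈ 𝔖(X), the limit as t → ∞ of S(h_t(Q))/μ(h_t(Q)) exists and equals inf_{k ∈ ℕ*} S(h_k(𝕌))/μ(h_k(𝕌)). -/
/-!
Write `φ k = S (h_k 𝕌) / μ (h_k 𝕌)` and `L = ⨅ k, φ k`. Meshing tiles `h_{ik} 𝕌` by disjoint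
`G`-translates of `h_k 𝕌`, so subadditivity and invariance give `φ (i k) ≤ φ k`. For large `t`,
asymptotic periodicity squeezes `h_t Q` between translates `I ⊆ h_t Q ⊆ O` of `h_{k k⁻} 𝕌` and
`h_{k k⁺} 𝕌`. Splitting off `h_t Q \ I` and `O \ h_t Q`, whose `S`-values are at most `c` times
their measures, yields
  `L - c (ρ_t - 1) ≤ S (h_t Q) / μ (h_t Q) ≤ φ k + c (ρ_t - 1)`,  `ρ_t = μ O / μ I → 1`,
and since `k` is arbitrary the ratio tends to `L`.
-/

open MeasureTheory Set ENNReal NNReal Filter Topology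

theorem ENNReal.tendsto_biInf_of_eventually_sandwich {α ι : Type*} {l : Filter α}
    {p : ι → Prop} {φ : ι → ℝ≥0∞} {x : α → ℝ≥0∞} (hp : ∃ i, p i)
    (h : ∀ i, p i → ∃ e : α → ℝ≥0∞, Tendsto e l (𝓝 0) ∧
      ∀ᶠ t in l, (⨅ (j) (_ : p j), φ j) ≤ x t + e t ∧ x t ≤ φ i + e t) :
    Tendsto x l (𝓝 (⨅ (i) (_ : p i), φ i)) := by
  set L := ⨅ (i) (_ : p i), φ i
  refine tendsto_order.2 ⟨fun a ha => ?_, fun a ha => ?_⟩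
  · obtain ⟨i, hi⟩ := hp
    obtain ⟨e, he, hbound⟩ := h i hi
    have hlim : Tendsto (fun t => L - e t) l (𝓝 (L - 0)) :=
      ENNReal.Tendsto.sub tendsto_const_nhds he (Or.inr zero_ne_top)
    filter_upwards [hlim.eventually (lt_mem_nhds (by rwa [tsub_zero])), hbound]
      with t hlt hbt
    exact hlt.trans_le (tsub_le_iff_right.2 hbt.1)
  · obtain ⟨i, hi, hia⟩ : ∃ i, p i ∧ φ i < a := by simpa [L, iInf_lt_iff] using ha
    obtain ⟨e, he, hbound⟩ := h i hi
    have hlim : Tendsto (fun t => φ i + e t) l (𝓝 (φ i + 0)) := tendsto_const_nhds.add he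
    filter_upwards [hlim.eventually (gt_mem_nhds (by rwa [add_zero])), hbound]
      with t hlt hbt
    exact hbt.2.trans_lt hlt

theorem ENNReal.sub_div_le_div_sub_one {a b v : ℝ≥0∞} (ha0 : a ≠ 0) (haT : a ≠ ⊤)
    (hav : a ≤ v) : (b - a) / v ≤ b / a - 1 :=
  calc (b - a) / v ≤ (b - a) / a := ENNReal.div_le_div_left hav _
    _ = b / a - 1 := by rw [ENNReal.sub_div fun _ _ => ha0, ENNReal.div_self ha0 haT]

section B0

variable {X : Type*} [TopologicalSpace X] [MeasurableSpace X]

def IsB0 (μ : Measure X) (A : Set X) : Prop :=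
  MeasurableSet A ∧ μ A < ⊤ ∧ μ (frontier A) = 0

def IsB0Subadditive (μ : Measure X) (S : Set X → ℝ≥0∞) : Prop :=
  ∀ A B, IsB0 μ A → IsB0 μ B → Disjoint A B → S (A ∪ B) ≤ S A + S B

variable {μ : Measure X}

theorem IsB0.union {A B : Set X} (hA : IsB0 μ A) (hB : IsB0 μ B) : IsB0 μ (A ∪ B) :=
  ⟨hA.1.union hB.1, (measure_union_le A B).trans_lt (ENNReal.add_lt_top.2 ⟨hA.2.1, hB.2.1⟩),
    measure_mono_null ((frontier_union_subset A B).trans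
      (union_subset_union inter_subset_left inter_subset_right))
      (measure_union_null hA.2.2 hB.2.2)⟩

theorem IsB0.diff {A B : Set X} (hA : IsB0 μ A) (hB : IsB0 μ B) : IsB0 μ (A \ B) := by
  refine ⟨hA.1.diff hB.1, (measure_mono sdiff_subset).trans_lt hA.2.1, ?_⟩
  have hfr : frontier (A \ B) ⊆ frontier A ∪ frontier B := by
    rw [sdiff_eq, ← frontier_compl B]
    exact (frontier_inter_subset A Bᶜ).trans
      (union_subset_union inter_subset_left inter_subset_right)
  exact measure_mono_null hfr (measure_union_null hA.2.2 hB.2.2)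

theorem IsB0.biUnion_finset {ι : Type*} {s : Finset ι} {F : ι → Set X}
    (hF : ∀ i ∈ s, IsB0 μ (F i)) : IsB0 μ (⋃ i ∈ s, F i) := by
  classical
  induction s using Finset.induction with
  | empty => simp [IsB0]
  | insert a s _ ih =>
    rw [Finset.set_biUnion_insert]
    exact (hF a (s.mem_insert_self a)).union
      (ih fun i hi => hF i (Finset.mem_insert_of_mem hi))

theorem IsB0.image_homeomorph [BorelSpace X] {A : Set X} (hA : IsB0 μ A) (e : X ≃ₜ X)
    {κ : ℝ≥0∞} (hκ : κ ≠ ⊤) (he : ∀ B, MeasurableSet B → μ (e '' B) = κ * μ B) :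
    IsB0 μ (e '' A) := by
  refine ⟨e.measurableEmbedding.measurableSet_image.2 hA.1, ?_, ?_⟩
  · rw [he A hA.1]
    exact ENNReal.mul_lt_top hκ.lt_top hA.2.1
  · rw [← e.image_frontier, he _ isClosed_frontier.measurableSet, hA.2.2, mul_zero]

end B0

section SetFunction

variable {X : Type*} [TopologicalSpace X] [MeasurableSpace X] {μ : Measure X}
  {S : Set X → ℝ≥0∞} {c : ℝ≥0∞}

theorem le_add_mul_measure_sdiff (hSsub : IsB0Subadditive μ S)
    (hSle : ∀ A, IsB0 μ A → S A ≤ c * μ A) {I A : Set X} (hI : IsB0 μ I) (hA : IsB0 μ A)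
    (hIA : I ⊆ A) : S A ≤ S I + c * μ (A \ I) :=
  calc S A = S (I ∪ A \ I) := by rw [union_sdiff_cancel hIA]
    _ ≤ S I + S (A \ I) := hSsub _ _ hI (hA.diff hI) disjoint_sdiff_right
    _ ≤ S I + c * μ (A \ I) := by gcongr; exact hSle _ (hA.diff hI)

theorem apply_biUnion_finset_le_sum {ι : Type*} {s : Finset ι} {F : ι → Set X}
    (hSsub : IsB0Subadditive μ S) (hS0 : S ∅ = 0) (hF : ∀ i ∈ s, IsB0 μ (F i))
    (hd : (s : Set ι).PairwiseDisjoint F) :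
    S (⋃ i ∈ s, F i) ≤ ∑ i ∈ s, S (F i) := by
  classical
  induction s using Finset.induction with
  | empty => simp [hS0]
  | insert a s ha ih =>
    have hFs : ∀ i ∈ s, IsB0 μ (F i) := fun i hi => hF i (Finset.mem_insert_of_mem hi)
    have hdisj : Disjoint (F a) (⋃ i ∈ s, F i) :=
      disjoint_iUnion₂_right.2 fun i hi =>
        hd (by simp) (by simp [hi]) fun hai => ha (hai ▸ hi)
    rw [Finset.set_biUnion_insert, Finset.sum_insert ha]
    calc S (F a ∪ ⋃ i ∈ s, F i) ≤ S (F a) + S (⋃ i ∈ s, F i) :=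
          hSsub _ _ (hF a (s.mem_insert_self a)) (IsB0.biUnion_finset hFs) hdisj
      _ ≤ S (F a) + ∑ i ∈ s, S (F i) := by gcongr; exact ih hFs (hd.subset (by simp))

theorem div_measure_le_of_tiling [BorelSpace X] {G : Set (X ≃ₜ X)}
    (hGμ : ∀ g ∈ G, ∀ B, MeasurableSet B → μ (g '' B) = μ B)
    (hSsub : IsB0Subadditive μ S) (hS0 : S ∅ = 0) (hSG : ∀ A, IsB0 μ A → ∀ g ∈ G, S (g '' A) = S A)
    {F : Set X} (hF : IsB0 μ F) {s : Finset (X ≃ₜ X)} (hsG : ∀ g ∈ s, g ∈ G)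
    (hd : (s : Set (X ≃ₜ X)).PairwiseDisjoint (fun g => g '' F)) :
    S (⋃ g ∈ s, g '' F) / μ (⋃ g ∈ s, g '' F) ≤ S F / μ F := by
  have hgF : ∀ g ∈ s, IsB0 μ (g '' F) := fun g hg =>
    hF.image_homeomorph g one_ne_top fun B hB => by rw [one_mul, hGμ g (hsG g hg) B hB]
  have hμ : μ (⋃ g ∈ s, g '' F) = s.card * μ F := by
    rw [measure_biUnion_finset hd fun g hg => (hgF g hg).1,
      Finset.sum_congr rfl fun g hg => hGμ g (hsG g hg) F hF.1, Finset.sum_const, nsmul_eq_mul]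
  have hS : S (⋃ g ∈ s, g '' F) ≤ s.card * S F := by
    calc S (⋃ g ∈ s, g '' F) ≤ ∑ g ∈ s, S (g '' F) :=
          apply_biUnion_finset_le_sum hSsub hS0 hgF hd
      _ = s.card * S F := by
          rw [Finset.sum_congr rfl fun g hg => hSG F hF g (hsG g hg), Finset.sum_const,
            nsmul_eq_mul]
  rcases s.eq_empty_or_nonempty with rfl | hs
  · simp [hS0]
  calc S (⋃ g ∈ s, g '' F) / μ (⋃ g ∈ s, g '' F) ≤ s.card * S F / (s.card * μ F) := by
        rw [hμ]; gcongr
    _ = S F / μ F :=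
        ENNReal.mul_div_mul_left _ _ (by simpa using hs.ne_empty) (natCast_ne_top _)

variable {I A O : Set X}

theorem div_measure_le_add_of_subset_of_subset (hSsub : IsB0Subadditive μ S)
    (hSle : ∀ A, IsB0 μ A → S A ≤ c * μ A) (hI : IsB0 μ I) (hA : IsB0 μ A)
    (hIA : I ⊆ A) (hAO : A ⊆ O) (hI0 : μ I ≠ 0) {φ : ℝ≥0∞} (hφ : S I / μ I ≤ φ) :
    S A / μ A ≤ φ + c * (μ O / μ I - 1) := by
  have hA0 : μ A ≠ 0 := fun h => hI0 (measure_mono_null hIA h)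
  have hSI : S I ≤ φ * μ A :=
    ((ENNReal.div_le_iff hI0 hI.2.1.ne).1 hφ).trans (by gcongr)
  have hsdiff : μ (A \ I) ≤ μ O - μ I := by
    rw [← measure_sdiff (hIA.trans hAO) hI.1.nullMeasurableSet hI.2.1.ne]
    exact measure_mono (sdiff_subset_sdiff_left hAO)
  calc S A / μ A ≤ (φ * μ A + c * (μ O - μ I)) / μ A := by
        gcongr
        exact (le_add_mul_measure_sdiff hSsub hSle hI hA hIA).trans (by gcongr)
    _ = φ + c * ((μ O - μ I) / μ A) := by
        rw [ENNReal.add_div, ENNReal.mul_div_cancel_right hA0 hA.2.1.ne, mul_div_assoc]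
    _ ≤ φ + c * (μ O / μ I - 1) := by
        gcongr
        exact ENNReal.sub_div_le_div_sub_one hI0 hI.2.1.ne (measure_mono hIA)

theorem le_div_measure_add_of_subset_of_subset (hSsub : IsB0Subadditive μ S)
    (hSle : ∀ A, IsB0 μ A → S A ≤ c * μ A) (hI : IsB0 μ I) (hA : IsB0 μ A) (hO : IsB0 μ O)
    (hIA : I ⊆ A) (hAO : A ⊆ O) (hI0 : μ I ≠ 0) {L : ℝ≥0∞} (hL : L ≤ S O / μ O) :
    L ≤ S A / μ A + c * (μ O / μ I - 1) := by
  have hA0 : μ A ≠ 0 := fun h => hI0 (measure_mono_null hIA h)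
  have hO0 : μ O ≠ 0 := fun h => hA0 (measure_mono_null hAO h)
  have hsdiff : μ (O \ A) ≤ μ O - μ I := by
    rw [← measure_sdiff (hIA.trans hAO) hI.1.nullMeasurableSet hI.2.1.ne]
    exact measure_mono (sdiff_subset_sdiff_right hIA)
  have hLA : L * μ A ≤ S A + c * (μ O - μ I) :=
    calc L * μ A ≤ L * μ O := by gcongr
      _ ≤ S O := (ENNReal.le_div_iff_mul_le (Or.inl hO0) (Or.inl hO.2.1.ne)).1 hL
      _ ≤ S A + c * (μ O - μ I) :=
        (le_add_mul_measure_sdiff hSsub hSle hA hO hAO).trans (by gcongr)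
  calc L ≤ (S A + c * (μ O - μ I)) / μ A :=
        (ENNReal.le_div_iff_mul_le (Or.inl hA0) (Or.inl hA.2.1.ne)).2 hLA
    _ = S A / μ A + c * ((μ O - μ I) / μ A) := by rw [ENNReal.add_div, mul_div_assoc]
    _ ≤ S A / μ A + c * (μ O / μ I - 1) := by
        gcongr
        exact ENNReal.sub_div_le_div_sub_one hI0 hI.2.1.ne (measure_mono hIA)

end SetFunction

section Scaling

variable {X : Type*} [TopologicalSpace X] [MeasurableSpace X]

structure IsMeshableScalingSpace (μ : Measure X) (G : Set (X ≃ₜ X)) (h : ℝ → X ≃ₜ X)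
    (U : Set X) : Prop where
  measure_image_of_mem : ∀ g ∈ G, ∀ B, MeasurableSet B → μ (g '' B) = μ B
  isB0_unit : IsB0 μ U
  measure_unit_ne_zero : μ U ≠ 0
  apply_one : ∀ x, h 1 x = x
  apply_mul : ∀ s t : ℝ, 0 < s → 0 < t → ∀ x, h (s * t) x = h s (h t x)
  measure_image : ∀ t : ℝ, 0 < t → ∀ B, MeasurableSet B → μ (h t '' B) = μ (h t '' U) * μ B
  mesh : ∀ i k : ℕ, 0 < i → 0 < k → ∃ s : Finset (X ≃ₜ X), (∀ g ∈ s, g ∈ G) ∧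
    (s : Set (X ≃ₜ X)).PairwiseDisjoint (fun g => g '' (h k '' U)) ∧
    h (i * k) '' U = ⋃ g ∈ s, g '' (h k '' U)

namespace IsMeshableScalingSpace

variable {μ : Measure X} {G : Set (X ≃ₜ X)} {h : ℝ → X ≃ₜ X} {U : Set X}

theorem image_one (hX : IsMeshableScalingSpace μ G h U) (A : Set X) : h 1 '' A = A := by
  simp [show ⇑(h 1) = id from funext hX.apply_one]

theorem measure_unit (hX : IsMeshableScalingSpace μ G h U) : μ U = 1 := by
  have hU := hX.measure_image 1 one_pos U hX.isB0_unit.1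
  rw [hX.image_one] at hU
  exact (ENNReal.mul_eq_left hX.measure_unit_ne_zero hX.isB0_unit.2.1.ne).1 hU.symm

variable [BorelSpace X]

theorem measure_image_mul (hX : IsMeshableScalingSpace μ G h U) {s t : ℝ} (hs : 0 < s)
    (ht : 0 < t) : μ (h (s * t) '' U) = μ (h s '' U) * μ (h t '' U) := by
  rw [← hX.measure_image s hs _ ((h t).measurableEmbedding.measurableSet_image.2
    hX.isB0_unit.1), ← image_comp]
  exact congrArg μ (image_congr fun x _ => hX.apply_mul s t hs ht x)

theorem measure_image_ne_zero_and_ne_top (hX : IsMeshableScalingSpace μ G h U) {t : ℝ}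
    (ht : 0 < t) : μ (h t '' U) ≠ 0 ∧ μ (h t '' U) ≠ ⊤ := by
  have hinv : μ (h t '' U) * μ (h t⁻¹ '' U) = 1 := by
    rw [← hX.measure_image_mul ht (inv_pos.2 ht), mul_inv_cancel₀ ht.ne', hX.image_one,
      hX.measure_unit]
  exact ⟨left_ne_zero_of_mul_eq_one hinv, by
    rw [ENNReal.eq_inv_of_mul_eq_one_left hinv]
    exact ENNReal.inv_ne_top.2 (right_ne_zero_of_mul_eq_one hinv)⟩

theorem isB0_image (hX : IsMeshableScalingSpace μ G h U) {t : ℝ} (ht : 0 < t) {A : Set X}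
    (hA : IsB0 μ A) : IsB0 μ (h t '' A) :=
  hA.image_homeomorph (h t) (hX.measure_image_ne_zero_and_ne_top ht).2 (hX.measure_image t ht)

theorem isB0_image_of_mem (hX : IsMeshableScalingSpace μ G h U) {g : X ≃ₜ X} (hg : g ∈ G)
    {A : Set X} (hA : IsB0 μ A) : IsB0 μ (g '' A) :=
  hA.image_homeomorph g one_ne_top fun B hB => by
    rw [one_mul, hX.measure_image_of_mem g hg B hB]

variable {S : Set X → ℝ≥0∞}

theorem div_measure_image_mul_le (hX : IsMeshableScalingSpace μ G h U)
    (hSsub : IsB0Subadditive μ S) (hS0 : S ∅ = 0)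
    (hSG : ∀ A, IsB0 μ A → ∀ g ∈ G, S (g '' A) = S A) {i k : ℕ}
    (hi : 0 < i) (hk : 0 < k) :
    S (h (i * k) '' U) / μ (h (i * k) '' U) ≤ S (h k '' U) / μ (h k '' U) := by
  obtain ⟨s, hsG, hd, htiling⟩ := hX.mesh i k hi hk
  rw [htiling]
  exact div_measure_le_of_tiling hX.measure_image_of_mem hSsub hS0 hSG
    (hX.isB0_image (Nat.cast_pos.2 hk) hX.isB0_unit) hsG hd

theorem div_measure_bounds_of_subset_of_subset (hX : IsMeshableScalingSpace μ G h U)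
    {c : ℝ≥0∞} (hSsub : IsB0Subadditive μ S)
    (hSle : ∀ A, IsB0 μ A → S A ≤ c * μ A) (hSG : ∀ A, IsB0 μ A → ∀ g ∈ G, S (g '' A) = S A)
    {A : Set X} (hA : IsB0 μ A) {k m p : ℕ} (hk : 0 < k) (hm : 0 < m) (hp : 0 < p)
    {g₁ g₂ : X ≃ₜ X} (hg₁ : g₁ ∈ G) (hg₂ : g₂ ∈ G) (hin : g₁ '' (h (k * m) '' U) ⊆ A)
    (hout : A ⊆ g₂ '' (h (k * p) '' U)) :
    (⨅ (j : ℕ) (_ : 0 < j), S (h j '' U) / μ (h j '' U)) ≤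
        S A / μ A + c * (μ (h p '' U) / μ (h m '' U) - 1) ∧
      S A / μ A ≤ S (h k '' U) / μ (h k '' U) + c * (μ (h p '' U) / μ (h m '' U) - 1) := by
  have hS0 : S ∅ = 0 := by simpa using hSle ∅ (by simp [IsB0])
  have hpos : ∀ {n : ℕ}, 0 < n → (0 : ℝ) < n := Nat.cast_pos.2
  have hkm := hX.isB0_image (mul_pos (hpos hk) (hpos hm)) hX.isB0_unit
  have hkp := hX.isB0_image (mul_pos (hpos hk) (hpos hp)) hX.isB0_unit
  have hμI : μ (g₁ '' (h (k * m) '' U)) = μ (h k '' U) * μ (h m '' U) := by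
    rw [hX.measure_image_of_mem g₁ hg₁ _ hkm.1, hX.measure_image_mul (hpos hk) (hpos hm)]
  have hμO : μ (g₂ '' (h (k * p) '' U)) = μ (h k '' U) * μ (h p '' U) := by
    rw [hX.measure_image_of_mem g₂ hg₂ _ hkp.1, hX.measure_image_mul (hpos hk) (hpos hp)]
  obtain ⟨hk0, hktop⟩ := hX.measure_image_ne_zero_and_ne_top (hpos hk)
  have hρ : μ (g₂ '' (h (k * p) '' U)) / μ (g₁ '' (h (k * m) '' U)) =
      μ (h p '' U) / μ (h m '' U) := by
    rw [hμO, hμI, ENNReal.mul_div_mul_left _ _ hk0 hktop]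
  have hI0 : μ (g₁ '' (h (k * m) '' U)) ≠ 0 := by
    rw [hμI]; exact mul_ne_zero hk0 (hX.measure_image_ne_zero_and_ne_top (hpos hm)).1
  have hinner : S (g₁ '' (h (k * m) '' U)) / μ (g₁ '' (h (k * m) '' U)) ≤
      S (h k '' U) / μ (h k '' U) := by
    rw [hSG _ hkm g₁ hg₁, hX.measure_image_of_mem g₁ hg₁ _ hkm.1, mul_comm]
    exact hX.div_measure_image_mul_le hSsub hS0 hSG hm hk
  have houter : (⨅ (j : ℕ) (_ : 0 < j), S (h j '' U) / μ (h j '' U)) ≤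
      S (g₂ '' (h (k * p) '' U)) / μ (g₂ '' (h (k * p) '' U)) := by
    rw [hSG _ hkp g₂ hg₂, hX.measure_image_of_mem g₂ hg₂ _ hkp.1]
    exact_mod_cast iInf₂_le (k * p) (Nat.mul_pos hk hp)
  rw [← hρ]
  exact ⟨le_div_measure_add_of_subset_of_subset hSsub hSle
      (hX.isB0_image_of_mem hg₁ hkm) hA (hX.isB0_image_of_mem hg₂ hkp) hin hout hI0 houter,
    div_measure_le_add_of_subset_of_subset hSsub hSle
      (hX.isB0_image_of_mem hg₁ hkm) hA hin hout hI0 hinner⟩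

end IsMeshableScalingSpace

end Scaling

theorem subadditive_theorem_meshable_general
    {X : Type*} [MetricSpace X] [MeasurableSpace X] [BorelSpace X]
    -- `μ` is a positive Radon measure on `X`
    (μ : Measure X)
    -- `G` is a subgroup of `Homeo(X)`
    (G : Set (X ≃ₜ X))
    -- `(h_t)_{t>0}` is a family of homeomorphisms of `X`
    (h : ℝ → X ≃ₜ X)
    -- (a) `μ` is `G`-invariant
    (hGinvariant : ∀ g ∈ G, ∀ B : Set X, MeasurableSet B → μ (g '' B) = μ B)
    -- (b) the unit cell `U`
    (U : Set X) (hUmeas : MeasurableSet U)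
    (hU0 : 0 < μ (interior U)) (hUfin : μ (interior U) < ⊤)
    (hUbd : μ (closure U \ interior U) = 0)
    -- (c) the axioms on `(h_t)_{t>0}`
    (hone : ∀ x : X, h 1 x = x)
    (hcomp : ∀ s t : ℝ, 0 < s → 0 < t → ∀ x : X, h (s * t) x = h s (h t x))
    (hscale : ∀ t : ℝ, 0 < t → ∀ B : Set X, MeasurableSet B →
      μ (h t '' B) = μ (h t '' U) * μ B)
    -- `(X,d,μ)` is meshable
    (hmesh : ∀ i k : ℕ, 0 < i → 0 < k → ∃ Gik : Finset (X ≃ₜ X), (∀ g ∈ Gik, g ∈ G) ∧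
      (Gik : Set (X ≃ₜ X)).PairwiseDisjoint (fun g => g '' (h k '' U)) ∧
      h (i * k) '' U = ⋃ g ∈ Gik, g '' (h k '' U))
    -- the class `𝔖(X) ⊆ B_0(X)`
    (𝔖 : Set (Set X))
    (h𝔖 : ∀ A ∈ 𝔖, MeasurableSet A ∧ μ A < ⊤ ∧ μ (closure A \ interior A) = 0)
    -- `(X,d,μ)` is asymptotically periodic with respect to `𝔖(X)`
    (hap : ∀ A ∈ 𝔖, ∀ k : ℕ, 0 < k → ∃ tAk > (0:ℝ), ∃ km kp : ℝ → ℕ, ∃ gm gp : ℝ → X ≃ₜ X,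
      (∀ t : ℝ, t ≥ tAk → 0 < km t ∧ 0 < kp t ∧ gm t ∈ G ∧ gp t ∈ G ∧
        gm t '' (h (k * km t) '' U) ⊆ h t '' A ∧
        h t '' A ⊆ gp t '' (h (k * kp t) '' U)) ∧
      Tendsto (fun t : ℝ => μ (h (kp t) '' U) / μ (h (km t) '' U)) atTop (𝓝 1))
    -- the set function `S` on `B_0(X)`, subadditive and `G`-invariant, with `S ≤ c·μ`
    (S : Set X → ℝ≥0∞)
    (hSsub : ∀ A B : Set X,
      (MeasurableSet A ∧ μ A < ⊤ ∧ μ (closure A \ interior A) = 0) →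
      (MeasurableSet B ∧ μ B < ⊤ ∧ μ (closure B \ interior B) = 0) →
      Disjoint A B → S (A ∪ B) ≤ S A + S B)
    (hSinv : ∀ A : Set X,
      (MeasurableSet A ∧ μ A < ⊤ ∧ μ (closure A \ interior A) = 0) →
      ∀ g ∈ G, S (g '' A) = S A)
    (c : ℝ≥0)
    (hSle : ∀ A : Set X,
      (MeasurableSet A ∧ μ A < ⊤ ∧ μ (closure A \ interior A) = 0) →
      S A ≤ c * μ A) :
    ∀ Q ∈ 𝔖, Tendsto (fun t : ℝ => S (h t '' Q) / μ (h t '' Q)) atTop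
      (𝓝 (⨅ (k : ℕ) (_ : 0 < k), S (h k '' U) / μ (h k '' U))) := by
  have hμU : μ (interior U) = μ U := measure_interior_of_null_frontier hUbd
  have hX : IsMeshableScalingSpace μ G h U :=
    ⟨hGinvariant, ⟨hUmeas, hμU ▸ hUfin, hUbd⟩, hμU ▸ hU0.ne', hone, hcomp, hscale, hmesh⟩
  intro Q hQ
  refine ENNReal.tendsto_biInf_of_eventually_sandwich ⟨1, one_pos⟩ fun k hk => ?_
  obtain ⟨tAk, htAk, km, kp, gm, gp, htiles, hρ⟩ := hap Q hQ k hk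
  refine ⟨fun t => c * (μ (h (kp t) '' U) / μ (h (km t) '' U) - 1), ?_, ?_⟩
  · have he : Tendsto (fun t => (c : ℝ≥0∞) * (μ (h (kp t) '' U) / μ (h (km t) '' U) - 1))
        atTop (𝓝 (c * (1 - 1))) :=
      ENNReal.Tendsto.const_mul (ENNReal.Tendsto.sub hρ tendsto_const_nhds (Or.inl one_ne_top))
        (Or.inr coe_ne_top)
    simpa using he
  · filter_upwards [eventually_ge_atTop tAk] with t ht
    obtain ⟨hkm, hkp, hgm, hgp, hin, hout⟩ := htiles t ht
    exact hX.div_measure_bounds_of_subset_of_subset hSsub hSle hSinv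
      (hX.isB0_image (htAk.trans_le ht) (h𝔖 Q hQ)) hk hkm hkp hgm hgp hin hout

/-- Subadditive theorem (Theorem 2.17, meshable case). If `(X,d,μ)` is a
`(G,(h_t)_{t>0})`-metric measure space which is meshable and asymptotically periodic with
respect to `𝔖(X) ⊆ B_0(X)`, and `S : B_0(X) → [0,∞]` is subadditive, `G`-invariant and
satisfies `S(A) ≤ c·μ(A)`, then for every `Q ∈ 𝔖(X)`,
`lim_{t→∞} S(h_t(Q))/μ(h_t(Q)) = inf_{k ∈ ℕ*} S(h_k(𝕌))/μ(h_k(𝕌))`. -/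
theorem subadditive_theorem_meshable
    {X : Type*} [MetricSpace X] [MeasurableSpace X] [BorelSpace X]
    [CompleteSpace X] [TopologicalSpace.SeparableSpace X] [LocallyCompactSpace X]
    -- `(X,d)` is a length space
    (hlength : ∀ x y : X, edist x y =
      ⨅ (γ : ℝ → X) (_ : ContinuousOn γ (Set.Icc 0 1)) (_ : γ 0 = x) (_ : γ 1 = y),
        eVariationOn γ (Set.Icc 0 1))
    -- `μ` is a positive Radon measure on `X`
    (μ : Measure X) [μ.Regular]
    -- `G` is a subgroup of `Homeo(X)`
    (G : Set (X ≃ₜ X))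
    (hGone : Homeomorph.refl X ∈ G)
    (hGmul : ∀ g₁ ∈ G, ∀ g₂ ∈ G, g₁.trans g₂ ∈ G)
    (hGinv : ∀ g ∈ G, g.symm ∈ G)
    -- `(h_t)_{t>0}` is a family of homeomorphisms of `X`
    (h : ℝ → X ≃ₜ X)
    -- (a) `μ` is `G`-invariant
    (hGinvariant : ∀ g ∈ G, ∀ B : Set X, MeasurableSet B → μ (g '' B) = μ B)
    -- (b) the unit cell `U`
    (U : Set X) (hUmeas : MeasurableSet U)
    (hU0 : 0 < μ (interior U)) (hUfin : μ (interior U) < ⊤)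
    (hUbd : μ (closure U \ interior U) = 0)
    -- (c) the axioms on `(h_t)_{t>0}`
    (hone : ∀ x : X, h 1 x = x)
    (hcomp : ∀ s t : ℝ, 0 < s → 0 < t → ∀ x : X, h (s * t) x = h s (h t x))
    (hscale : ∀ t : ℝ, 0 < t → ∀ B : Set X, MeasurableSet B →
      μ (h t '' B) = μ (h t '' U) * μ B)
    -- `(X,d,μ)` is meshable
    (hmesh : ∀ i k : ℕ, 0 < i → 0 < k → ∃ Gik : Finset (X ≃ₜ X), (∀ g ∈ Gik, g ∈ G) ∧
      (Gik : Set (X ≃ₜ X)).PairwiseDisjoint (fun g => g '' (h k '' U)) ∧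
      h (i * k) '' U = ⋃ g ∈ Gik, g '' (h k '' U))
    -- the class `𝔖(X) ⊆ B_0(X)`
    (𝔖 : Set (Set X))
    (h𝔖 : ∀ A ∈ 𝔖, MeasurableSet A ∧ μ A < ⊤ ∧ μ (closure A \ interior A) = 0)
    -- `(X,d,μ)` is asymptotically periodic with respect to `𝔖(X)`
    (hap : ∀ A ∈ 𝔖, ∀ k : ℕ, 0 < k → ∃ tAk > (0:ℝ), ∃ km kp : ℝ → ℕ, ∃ gm gp : ℝ → X ≃ₜ X,
      (∀ t : ℝ, t ≥ tAk → 0 < km t ∧ 0 < kp t ∧ gm t ∈ G ∧ gp t ∈ G ∧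
        gm t '' (h (k * km t) '' U) ⊆ h t '' A ∧
        h t '' A ⊆ gp t '' (h (k * kp t) '' U)) ∧
      Tendsto (fun t : ℝ => μ (h (kp t) '' U) / μ (h (km t) '' U)) atTop (𝓝 1))
    -- the set function `S` on `B_0(X)`, subadditive and `G`-invariant, with `S ≤ c·μ`
    (S : Set X → ℝ≥0∞)
    (hSsub : ∀ A B : Set X,
      (MeasurableSet A ∧ μ A < ⊤ ∧ μ (closure A \ interior A) = 0) →
      (MeasurableSet B ∧ μ B < ⊤ ∧ μ (closure B \ interior B) = 0) →
      Disjoint A B → S (A ∪ B) ≤ S A + S B)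
    (hSinv : ∀ A : Set X,
      (MeasurableSet A ∧ μ A < ⊤ ∧ μ (closure A \ interior A) = 0) →
      ∀ g ∈ G, S (g '' A) = S A)
    (c : ℝ≥0) (hc : 0 < c)
    (hSle : ∀ A : Set X,
      (MeasurableSet A ∧ μ A < ⊤ ∧ μ (closure A \ interior A) = 0) →
      S A ≤ c * μ A) :
    ∀ Q ∈ 𝔖, Tendsto (fun t : ℝ => S (h t '' Q) / μ (h t '' Q)) atTop
      (𝓝 (⨅ (k : ℕ) (_ : 0 < k), S (h k '' U) / μ (h k '' U))) :=
  subadditive_theorem_meshable_general μ G h hGinvariant U hUmeas hU0 hUfin hUbd hone hcomp hscale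
    hmesh 𝔖 h𝔖 hap S hSsub hSinv c hSle
end

section
/- Let (X,d) be a complete, separable, locally compact length metric space, let Ω ⊆ X be a bounded open set, and let μ be a positive Radon measure on X which is doubling on Ω. Let S : O(Ω) → [0,∞] be an increasing set function on the open subsets of Ω with S(∅) = 0, which is superadditive (S(A ∪ B) ≥ S(A) + S(B) for disjoint open A, B), subadditive (S(A ∪ B) ≤ S(A) + S(B) for all open A, B), and satisfies S(A) ≤ ∫_A g dμ for all open A ⊆ Ω, for some nonnegative g ∈ L¹_μ(Ω). Then there exists a nonnegative λ ∈ L¹_μ(Ω) such that S(A) = ∫_A λ dμ for every open A ⊆ Ω, and for μ-a.e. x ∈ Ω the limit lim_{ρ→0} S(Q_ρ(x))/μ(Q_ρ(x)) exists and equals λ(x). -/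
/-!
Extend `S` by the outer envelope `E ↦ inf {S A | A open, E ∩ Ω ⊆ A ⊆ Ω}`. Domination by the
finite, outer regular measure `g μ` makes `S` countably subadditive on open sets, so the envelope
is an outer measure; superadditivity makes it a metric outer measure, hence Borel sets are
Carathéodory measurable and the envelope is a Borel measure `ν ≤ g μ` which agrees with `S` on
the open subsets of `Ω`. Then `λ` is the Radon–Nikodym derivative of `ν` with respect to `μ|Ω`.

For the limit, doubling at the points of `Ω` makes closed balls a Vitali family for `μ|Ω`, so
Lebesgue's differentiation theorem holds along closed balls; the doubling bound
`μ (closedBall x ρ) ≤ C μ (ball x ρ)` transfers it to the open balls `Q_ρ(x)`.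
-/

open MeasureTheory Set ENNReal NNReal Filter Topology Metric

noncomputable section SetFunction

variable {X : Type*} [MetricSpace X] {Ω : Set X} {S : Set X → ℝ≥0∞}

theorem accumulate_le_sum_of_subadditive
    (hsub : ∀ A B : Set X, IsOpen A → IsOpen B → A ⊆ Ω → B ⊆ Ω → S (A ∪ B) ≤ S A + S B)
    {A : ℕ → Set X} (hA : ∀ i, IsOpen (A i)) (hAΩ : ∀ i, A i ⊆ Ω) (n : ℕ) :
    S (accumulate A n) ≤ ∑ i ∈ Finset.range (n + 1), S (A i) := by
  induction n with
  | zero => simp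
  | succ n ih =>
    rw [accumulate_succ, Finset.sum_range_succ]
    exact (hsub _ _ (isOpen_biUnion fun i _ => hA i) (hA _) (iUnion₂_subset fun i _ => hAΩ i)
      (hAΩ _)).trans (add_le_add_left ih _)

theorem iUnion_le_tsum_of_subadditive [MeasurableSpace X] [OpensMeasurableSpace X]
    (hΩ : IsOpen Ω) (m : Measure X) [IsFiniteMeasure m] [m.OuterRegular]
    (hmono : ∀ A B : Set X, IsOpen A → IsOpen B → A ⊆ B → B ⊆ Ω → S A ≤ S B)
    (hsub : ∀ A B : Set X, IsOpen A → IsOpen B → A ⊆ Ω → B ⊆ Ω → S (A ∪ B) ≤ S A + S B)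
    (hle : ∀ A : Set X, IsOpen A → A ⊆ Ω → S A ≤ m A)
    {A : ℕ → Set X} (hA : ∀ i, IsOpen (A i)) (hAΩ : ∀ i, A i ⊆ Ω) :
    S (⋃ i, A i) ≤ ∑' i, S (A i) := by
  have hacc : ∀ n, IsOpen (accumulate A n) := fun n => isOpen_biUnion fun i _ => hA i
  have haccΩ : ∀ n, accumulate A n ⊆ Ω := fun n => iUnion₂_subset fun i _ => hAΩ i
  refine ENNReal.le_of_forall_pos_le_add fun ε hε _ => ?_
  -- Some tail of the union has small `m`-measure, hence lies in an open set of small measure.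
  have htail : Tendsto (fun n => m ((⋃ i, A i) \ accumulate A n)) atTop (𝓝 0) := by
    have := tendsto_measure_iInter_atTop (μ := m)
      (fun n => ((isOpen_iUnion hA).measurableSet.diff (hacc n).measurableSet).nullMeasurableSet)
      (fun _ _ h => sdiff_subset_sdiff_right (monotone_accumulate h)) ⟨0, measure_ne_top _ _⟩
    rwa [← sdiff_iUnion, iUnion_accumulate, sdiff_self, measure_empty] at this
  obtain ⟨n, hn⟩ := (htail.eventually_lt_const (ENNReal.coe_pos.2 hε)).exists
  obtain ⟨O, hO_sup, hO, hOε⟩ := Set.exists_isOpen_lt_of_lt _ _ hn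
  have hcover : (⋃ i, A i) ⊆ accumulate A n ∪ O ∩ Ω := fun y hy => by
    by_cases hyn : y ∈ accumulate A n
    · exact Or.inl hyn
    · obtain ⟨i, hi⟩ := mem_iUnion.1 hy
      exact Or.inr ⟨hO_sup ⟨hy, hyn⟩, hAΩ i hi⟩
  calc S (⋃ i, A i) ≤ S (accumulate A n ∪ O ∩ Ω) :=
        hmono _ _ (isOpen_iUnion hA) ((hacc n).union (hO.inter hΩ)) hcover
          (union_subset (haccΩ n) inter_subset_right)
    _ ≤ S (accumulate A n) + S (O ∩ Ω) :=
        hsub _ _ (hacc n) (hO.inter hΩ) (haccΩ n) inter_subset_right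
    _ ≤ ∑' i, S (A i) + ε := by
        gcongr
        · exact (accumulate_le_sum_of_subadditive hsub hA hAΩ n).trans (ENNReal.sum_le_tsum _)
        · exact (hle _ (hO.inter hΩ) inter_subset_right).trans
            ((measure_mono inter_subset_left).trans hOε.le)

def openEnvelope (Ω : Set X) (S : Set X → ℝ≥0∞) (E : Set X) : ℝ≥0∞ :=
  ⨅ (A : Set X) (_ : IsOpen A ∧ A ⊆ Ω ∧ E ∩ Ω ⊆ A), S A

theorem openEnvelope_le {E A : Set X} (hA : IsOpen A) (hAΩ : A ⊆ Ω) (hEA : E ∩ Ω ⊆ A) :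
    openEnvelope Ω S E ≤ S A :=
  iInf₂_le A ⟨hA, hAΩ, hEA⟩

theorem le_openEnvelope {E : Set X} {c : ℝ≥0∞}
    (h : ∀ A : Set X, IsOpen A → A ⊆ Ω → E ∩ Ω ⊆ A → c ≤ S A) : c ≤ openEnvelope Ω S E :=
  le_iInf₂ fun A hA => h A hA.1 hA.2.1 hA.2.2

theorem openEnvelope_mono : Monotone (openEnvelope Ω S) := fun _ _ hEF =>
  le_openEnvelope fun _ hA hAΩ hFA =>
    openEnvelope_le hA hAΩ ((inter_subset_inter_left Ω hEF).trans hFA)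

theorem openEnvelope_eq_of_isOpen
    (hmono : ∀ A B : Set X, IsOpen A → IsOpen B → A ⊆ B → B ⊆ Ω → S A ≤ S B)
    {A : Set X} (hA : IsOpen A) (hAΩ : A ⊆ Ω) : openEnvelope Ω S A = S A :=
  (openEnvelope_le hA hAΩ inter_subset_left).antisymm <| le_openEnvelope fun _ hB hBΩ hAB =>
    hmono _ _ hA hB (by rwa [inter_eq_self_of_subset_left hAΩ] at hAB) hBΩ

theorem openEnvelope_iUnion_le
    (hσ : ∀ A : ℕ → Set X, (∀ i, IsOpen (A i)) → (∀ i, A i ⊆ Ω) → S (⋃ i, A i) ≤ ∑' i, S (A i))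
    (E : ℕ → Set X) : openEnvelope Ω S (⋃ i, E i) ≤ ∑' i, openEnvelope Ω S (E i) := by
  refine ENNReal.le_of_forall_pos_le_add fun ε hε hfin => ?_
  obtain ⟨δ, hδ, hδε⟩ := ENNReal.exists_pos_sum_of_countable' (coe_ne_zero.2 hε.ne') ℕ
  have hA : ∀ i, ∃ A : Set X, (IsOpen A ∧ A ⊆ Ω ∧ E i ∩ Ω ⊆ A) ∧
      S A < openEnvelope Ω S (E i) + δ i := fun i => by
    have hlt := ENNReal.lt_add_right ((ENNReal.le_tsum i).trans_lt hfin).ne (hδ i).ne'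
    simpa only [openEnvelope, iInf_lt_iff, exists_prop] using hlt
  choose A hA hAδ using hA
  calc openEnvelope Ω S (⋃ i, E i) ≤ S (⋃ i, A i) :=
        openEnvelope_le (isOpen_iUnion fun i => (hA i).1) (iUnion_subset fun i => (hA i).2.1)
          (by rw [iUnion_inter]; exact iUnion_mono fun i => (hA i).2.2)
    _ ≤ ∑' i, S (A i) := hσ A (fun i => (hA i).1) fun i => (hA i).2.1
    _ ≤ ∑' i, (openEnvelope Ω S (E i) + δ i) := ENNReal.tsum_le_tsum fun i => (hAδ i).le
    _ ≤ ∑' i, openEnvelope Ω S (E i) + ε := by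
        rw [ENNReal.tsum_add]
        exact add_le_add_right hδε.le _

theorem openEnvelope_le_measure [MeasurableSpace X] [OpensMeasurableSpace X] (hΩ : IsOpen Ω)
    (m : Measure X) [IsFiniteMeasure m] [m.OuterRegular]
    (hle : ∀ A : Set X, IsOpen A → A ⊆ Ω → S A ≤ m A) (E : Set X) :
    openEnvelope Ω S E ≤ m E := by
  refine ENNReal.le_of_forall_pos_le_add fun ε hε _ => ?_
  obtain ⟨O, hEO, hO, hOε⟩ := E.exists_isOpen_lt_of_lt _
    (ENNReal.lt_add_right (measure_ne_top m E) (coe_ne_zero.2 hε.ne'))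
  calc openEnvelope Ω S E ≤ S (O ∩ Ω) :=
        openEnvelope_le (hO.inter hΩ) inter_subset_right (inter_subset_inter_left Ω hEO)
    _ ≤ m E + ε := (hle _ (hO.inter hΩ) inter_subset_right).trans
        ((measure_mono inter_subset_left).trans hOε.le)

def openEnvelopeOuterMeasure (Ω : Set X) (S : Set X → ℝ≥0∞) (hS : S ∅ = 0)
    (hσ : ∀ A : ℕ → Set X, (∀ i, IsOpen (A i)) → (∀ i, A i ⊆ Ω) → S (⋃ i, A i) ≤ ∑' i, S (A i)) :
    OuterMeasure X where
  measureOf := openEnvelope Ω S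
  empty := le_antisymm ((openEnvelope_le isOpen_empty (empty_subset Ω) (by simp)).trans_eq hS)
    zero_le
  mono h := openEnvelope_mono h
  iUnion_nat E _ := openEnvelope_iUnion_le hσ E

theorem isMetric_openEnvelopeOuterMeasure
    (hmono : ∀ A B : Set X, IsOpen A → IsOpen B → A ⊆ B → B ⊆ Ω → S A ≤ S B)
    (hsuper : ∀ A B : Set X, IsOpen A → IsOpen B → A ⊆ Ω → B ⊆ Ω → Disjoint A B →
      S A + S B ≤ S (A ∪ B)) (hS : S ∅ = 0)
    (hσ : ∀ A : ℕ → Set X, (∀ i, IsOpen (A i)) → (∀ i, A i ⊆ Ω) → S (⋃ i, A i) ≤ ∑' i, S (A i)) :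
    (openEnvelopeOuterMeasure Ω S hS hσ).IsMetric := by
  rintro E F ⟨r, hr, hEF⟩
  refine (measure_union_le E F).antisymm (le_openEnvelope fun A hA hAΩ hEFA => ?_)
  -- Split `A` into the points closer to `E` and those closer to `F`.
  have hE : ∀ x ∈ E, infEDist x E < infEDist x F := fun x hx => by
    rw [infEDist_zero_of_mem hx]
    exact (pos_iff_ne_zero.2 hr).trans_le (le_infEDist.2 (hEF x hx))
  have hF : ∀ y ∈ F, infEDist y F < infEDist y E := fun y hy => by
    rw [infEDist_zero_of_mem hy]
    exact (pos_iff_ne_zero.2 hr).trans_le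
      (le_infEDist.2 fun x hx => (hEF x hx y hy).trans_eq (edist_comm x y))
  set U := A ∩ {x | infEDist x E < infEDist x F}
  set V := A ∩ {x | infEDist x F < infEDist x E}
  have hU : IsOpen U := hA.inter (isOpen_lt continuous_infEDist continuous_infEDist)
  have hV : IsOpen V := hA.inter (isOpen_lt continuous_infEDist continuous_infEDist)
  calc openEnvelope Ω S E + openEnvelope Ω S F ≤ S U + S V :=
        add_le_add (openEnvelope_le hU (inter_subset_left.trans hAΩ)
            fun x hx => ⟨hEFA ⟨Or.inl hx.1, hx.2⟩, hE x hx.1⟩)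
          (openEnvelope_le hV (inter_subset_left.trans hAΩ)
            fun y hy => ⟨hEFA ⟨Or.inr hy.1, hy.2⟩, hF y hy.1⟩)
    _ ≤ S (U ∪ V) := hsuper U V hU hV (inter_subset_left.trans hAΩ) (inter_subset_left.trans hAΩ)
          (disjoint_left.2 fun _ hxU hxV => lt_asymm (α := ℝ≥0∞) hxU.2 hxV.2)
    _ ≤ S A := hmono _ _ (hU.union hV) hA (union_subset inter_subset_left inter_subset_left) hAΩ

theorem exists_measure_le_eq_on_isOpen [MeasurableSpace X] [BorelSpace X] (hΩ : IsOpen Ω)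
    (m : Measure X) [IsFiniteMeasure m]
    (hmono : ∀ A B : Set X, IsOpen A → IsOpen B → A ⊆ B → B ⊆ Ω → S A ≤ S B)
    (hsuper : ∀ A B : Set X, IsOpen A → IsOpen B → A ⊆ Ω → B ⊆ Ω → Disjoint A B →
      S A + S B ≤ S (A ∪ B))
    (hsub : ∀ A B : Set X, IsOpen A → IsOpen B → A ⊆ Ω → B ⊆ Ω → S (A ∪ B) ≤ S A + S B)
    (hle : ∀ A : Set X, IsOpen A → A ⊆ Ω → S A ≤ m A) :
    ∃ ν : Measure X, ν ≤ m ∧ ∀ A : Set X, IsOpen A → A ⊆ Ω → ν A = S A := by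
  have hS : S ∅ = 0 :=
    le_zero_iff.1 <| (hle ∅ isOpen_empty (empty_subset Ω)).trans_eq measure_empty
  have hσ := fun A => iUnion_le_tsum_of_subadditive (A := A) hΩ m hmono hsub hle
  set μS := openEnvelopeOuterMeasure Ω S hS hσ
  have hμS : (inferInstance : MeasurableSpace X) ≤ μS.caratheodory :=
    (BorelSpace.measurable_eq (α := X)).le.trans
      (isMetric_openEnvelopeOuterMeasure hmono hsuper hS hσ).borel_le_caratheodory
  refine ⟨μS.toMeasure hμS, Measure.le_iff.2 fun E hE => ?_, fun A hA hAΩ => ?_⟩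
  · rw [toMeasure_apply _ _ hE]
    exact openEnvelope_le_measure hΩ m hle E
  · rw [toMeasure_apply _ _ hA.measurableSet]
    exact openEnvelope_eq_of_isOpen hmono hA hAΩ

end SetFunction

section Doubling

variable {X : Type*} [MetricSpace X] [MeasurableSpace X] {μ : Measure X} {C : ℝ≥0} {x : X}

theorem measure_ball_two_mul_le
    (hd : ∀ ρ : ℝ, 0 < ρ → μ (ball x ρ) ≤ C * μ (ball x (ρ / 2))) {r : ℝ} (hr : 0 < r) :
    μ (ball x (2 * r)) ≤ C * μ (ball x r) := by
  simpa using hd (2 * r) (by positivity)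

theorem measure_closedBall_le_mul_measure_ball
    (hd : ∀ ρ : ℝ, 0 < ρ → μ (ball x ρ) ≤ C * μ (ball x (ρ / 2))) {r : ℝ} (hr : 0 < r) :
    μ (closedBall x r) ≤ C * μ (ball x r) :=
  (measure_mono (closedBall_subset_ball (by linarith))).trans (measure_ball_two_mul_le hd hr)

theorem measure_closedBall_three_mul_le
    (hd : ∀ ρ : ℝ, 0 < ρ → μ (ball x ρ) ≤ C * μ (ball x (ρ / 2))) {r : ℝ} (hr : 0 < r) :
    μ (closedBall x (3 * r)) ≤ ↑(C ^ 2) * μ (closedBall x r) :=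
  calc μ (closedBall x (3 * r)) ≤ μ (ball x (2 * (2 * r))) :=
        measure_mono (closedBall_subset_ball (by linarith))
    _ ≤ C * (C * μ (ball x r)) := (measure_ball_two_mul_le hd (by positivity)).trans
        (by gcongr; exact measure_ball_two_mul_le hd hr)
    _ ≤ ↑(C ^ 2) * μ (closedBall x r) := by
        rw [ENNReal.coe_pow, sq, mul_assoc]
        gcongr
        exact ball_subset_closedBall

end Doubling

theorem norm_setAverage_sub_le_mul {α E : Type*} [MeasurableSpace α] [NormedAddCommGroup E]
    [NormedSpace ℝ E] [CompleteSpace E] {μ : Measure α} {s t : Set α} {C : ℝ≥0} (hst : s ⊆ t)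
    (hs : μ s ≠ 0) (ht : μ t ≠ ∞) (hC : μ t ≤ C * μ s) {f : α → E} (hf : IntegrableOn f t μ)
    (c : E) : ‖(⨍ x in s, f x ∂μ) - c‖ ≤ C * ⨍ x in t, ‖f x - c‖ ∂μ := by
  have hs_top : μ s ≠ ∞ := ne_top_of_le_ne_top ht (measure_mono hst)
  have hs_pos : 0 < μ.real s := ENNReal.toReal_pos hs hs_top
  have ht_pos : 0 < μ.real t := hs_pos.trans_le (measureReal_mono hst ht)
  have hC_real : μ.real t ≤ C * μ.real s := by
    simpa [measureReal_def, ENNReal.toReal_mul] using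
      ENNReal.toReal_mono (ENNReal.mul_ne_top ENNReal.coe_ne_top hs_top) hC
  calc ‖(⨍ x in s, f x ∂μ) - c‖ = ‖(μ.real s)⁻¹ • ∫ x in s, (f x - c) ∂μ‖ := by
        rw [integral_sub (hf.mono_set hst) (integrableOn_const hs_top), setIntegral_const,
          smul_sub, smul_smul, inv_mul_cancel₀ hs_pos.ne', one_smul, setAverage_eq]
    _ ≤ (μ.real s)⁻¹ * ∫ x in t, ‖f x - c‖ ∂μ := by
        rw [norm_smul, Real.norm_of_nonneg (inv_nonneg.2 hs_pos.le)]
        gcongr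
        refine (norm_integral_le_integral_norm _).trans (setIntegral_mono_set ?_ ?_ ?_)
        · exact (hf.sub (integrableOn_const ht)).norm
        · exact ae_of_all _ fun _ => norm_nonneg _
        · exact hst.eventuallyLE
    _ ≤ (C * (μ.real t)⁻¹) * ∫ x in t, ‖f x - c‖ ∂μ := by
        gcongr
        rw [← div_eq_mul_inv, le_div_iff₀ ht_pos, inv_mul_le_iff₀ hs_pos]
        linarith
    _ = C * ⨍ x in t, ‖f x - c‖ ∂μ := by
        rw [setAverage_eq, smul_eq_mul, mul_assoc]

section Vitali

variable {X : Type*} [MetricSpace X] [MeasurableSpace X]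

/-- Unlike `Vitali.vitaliFamily`, the doubling condition is only required at points of `Ω`: the
covering property only has to hold `μ.restrict Ω`-almost everywhere. -/
theorem exists_vitaliFamily_restrict_closedBall [OpensMeasurableSpace X]
    [SecondCountableTopology X] (μ : Measure X) [IsLocallyFiniteMeasure μ] {Ω : Set X}
    (hΩ : MeasurableSet Ω) (C : ℝ≥0)
    (hC : ∀ x ∈ Ω, ∀ r : ℝ, 0 < r → μ (closedBall x (3 * r)) ≤ C * μ (closedBall x r)) :
    ∃ v : VitaliFamily (μ.restrict Ω), ∀ x, ∀ r : ℝ, 0 < r → closedBall x r ∈ v.setsAt x := by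
  refine ⟨{ setsAt := fun x => {a | ∃ r > 0, a = closedBall x r}
            measurableSet := ?_, nonempty_interior := ?_, nontrivial := ?_, covering := ?_ },
    fun x r hr => ⟨r, hr, rfl⟩⟩
  · rintro x _ ⟨r, -, rfl⟩
    exact measurableSet_closedBall
  · rintro x _ ⟨r, hr, rfl⟩
    exact ⟨x, ball_subset_interior_closedBall (mem_ball_self hr)⟩
  · exact fun x ε hε => ⟨closedBall x ε, ⟨ε, hε, rfl⟩, Subset.rfl⟩
  intro s f hf hfine
  let t : Set (X × ℝ) := {p | p.1 ∈ s ∩ Ω ∧ 0 < p.2 ∧ closedBall p.1 p.2 ∈ f p.1}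
  have ht : ∀ x ∈ s ∩ Ω, ∀ ε > (0 : ℝ), ∃ p ∈ t, p.2 ≤ ε ∧ p.1 = x := by
    intro x hx ε hε
    obtain ⟨a, haf, haε⟩ := hfine x hx.1 ε hε
    obtain ⟨r, hr, rfl⟩ := hf x hx.1 haf
    have : closedBall x (min r ε) = closedBall x r :=
      (closedBall_subset_closedBall (min_le_left r ε)).antisymm fun y hy =>
        mem_closedBall.2 (le_min (mem_closedBall.1 hy) (mem_closedBall.1 (haε hy)))
    exact ⟨(x, min r ε), ⟨hx, lt_min hr hε, this ▸ haf⟩, min_le_right r ε, rfl⟩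
  obtain ⟨u, hut, -, hudisj, hucov⟩ := Vitali.exists_disjoint_covering_ae μ (s ∩ Ω) t C
    Prod.snd Prod.fst (fun p => closedBall p.1 p.2) (fun _ _ => Subset.rfl)
    (fun p hp => hC p.1 hp.1.2 p.2 hp.2.1)
    (fun p hp => ⟨p.1, ball_subset_interior_closedBall (mem_ball_self hp.2.1)⟩)
    (fun _ _ => isClosed_closedBall) ht
  refine ⟨(fun p => (p.1, closedBall p.1 p.2)) '' u, ?_, ?_, ?_, ?_⟩
  · rintro _ ⟨p, hp, rfl⟩
    exact (hut hp).1.1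
  · rintro _ ⟨p, hp, rfl⟩ _ ⟨q, hq, rfl⟩ hpq
    exact hudisj hp hq fun h => hpq (h ▸ rfl)
  · rintro _ ⟨p, hp, rfl⟩
    exact (hut hp).2.2
  · rw [biUnion_image, Measure.restrict_apply' hΩ, sdiff_inter_right_comm]
    exact hucov

theorem VitaliFamily.tendsto_closedBall_filterAt {μ : Measure X} (v : VitaliFamily μ) {x : X}
    (hv : ∀ r : ℝ, 0 < r → closedBall x r ∈ v.setsAt x) :
    Tendsto (closedBall x) (𝓝[>] 0) (v.filterAt x) :=
  v.tendsto_filterAt_iff.2 ⟨eventually_mem_nhdsWithin.mono hv, fun _ hε =>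
    Filter.mem_of_superset (Ioc_mem_nhdsGT hε) fun _ hr => closedBall_subset_closedBall hr.2⟩

theorem ae_tendsto_setAverage_ball {E : Type*} [BorelSpace X] [SecondCountableTopology X]
    [NormedAddCommGroup E] [NormedSpace ℝ E] [CompleteSpace E] {μ : Measure X}
    [IsLocallyFiniteMeasure μ] {Ω : Set X} (hΩ : IsOpen Ω) {C : ℝ≥0}
    (hd : ∀ x ∈ Ω, ∀ ρ : ℝ, 0 < ρ → μ (ball x ρ) ≤ C * μ (ball x (ρ / 2)))
    {f : X → E} (hf : IntegrableOn f Ω μ) :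
    ∀ᵐ x ∂μ.restrict Ω, Tendsto (fun ρ => ⨍ y in ball x ρ, f y ∂μ) (𝓝[>] 0) (𝓝 (f x)) := by
  obtain ⟨v, hv⟩ := exists_vitaliFamily_restrict_closedBall μ hΩ.measurableSet (C ^ 2)
    fun x hx _ hr => measure_closedBall_three_mul_le (hd x hx) hr
  filter_upwards [ae_restrict_mem hΩ.measurableSet,
    v.ae_tendsto_average_norm_sub hf.locallyIntegrable, ae_restrict_of_ae μ.support_mem_ae]
    with x hxΩ hx hx_supp
  have hsmall : ∀ᶠ ρ in 𝓝[>] (0 : ℝ), closedBall x ρ ⊆ Ω :=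
    nhdsWithin_le_nhds (eventually_closedBall_subset (hΩ.mem_nhds hxΩ))
  have hfin : ∀ᶠ ρ in 𝓝[>] (0 : ℝ), μ (closedBall x ρ) < ∞ := by
    obtain ⟨s, hs, hμs⟩ := μ.finiteAt_nhds x
    exact nhdsWithin_le_nhds ((eventually_closedBall_subset hs).mono fun _ h =>
      (measure_mono h).trans_lt hμs)
  have hcb : Tendsto (fun ρ => ⨍ y in closedBall x ρ, ‖f y - f x‖ ∂μ) (𝓝[>] 0) (𝓝 0) := by
    refine (hx.comp (v.tendsto_closedBall_filterAt (hv x))).congr' ?_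
    filter_upwards [hsmall] with ρ hρ
    rw [Function.comp_apply, Measure.restrict_restrict_of_subset hρ]
  rw [tendsto_iff_norm_sub_tendsto_zero]
  refine squeeze_zero' (.of_forall fun _ => norm_nonneg _) ?_
    (by simpa using hcb.const_mul (C : ℝ))
  filter_upwards [hsmall, hfin, self_mem_nhdsWithin] with ρ hρΩ hρ_fin (hρ : 0 < ρ)
  exact norm_setAverage_sub_le_mul ball_subset_closedBall
    ((Measure.mem_support_iff_forall x).1 hx_supp _ (ball_mem_nhds x hρ)).ne' hρ_fin.ne
    (measure_closedBall_le_mul_measure_ball (hd x hxΩ) hρ) (hf.mono_set hρΩ) (f x)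

end Vitali

theorem integral_representation_of_set_function_general
    {X : Type*} [MetricSpace X] [MeasurableSpace X] [BorelSpace X]
    [TopologicalSpace.SeparableSpace X] [LocallyCompactSpace X]
    -- `Ω ⊆ X` is a bounded open set
    (Ω : Set X) (hΩopen : IsOpen Ω)
    -- `μ` is a positive Radon measure on `X`, doubling on `Ω`
    (μ : Measure X) [μ.Regular]
    (Cd : ℝ≥0)
    (hdoubling : ∀ x ∈ Ω, ∀ ρ : ℝ, 0 < ρ →
      μ (Metric.ball x ρ) ≤ Cd * μ (Metric.ball x (ρ / 2)))
    -- `S` is an increasing set function on the open subsets of `Ω` with `S(∅) = 0`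
    (S : Set X → ℝ≥0∞)
    (hmono : ∀ A B : Set X, IsOpen A → IsOpen B → A ⊆ B → B ⊆ Ω → S A ≤ S B)
    -- `S` is superadditive
    (hsuper : ∀ A B : Set X, IsOpen A → IsOpen B → A ⊆ Ω → B ⊆ Ω → Disjoint A B →
      S A + S B ≤ S (A ∪ B))
    -- `S` is subadditive
    (hsub : ∀ A B : Set X, IsOpen A → IsOpen B → A ⊆ Ω → B ⊆ Ω → S (A ∪ B) ≤ S A + S B)
    -- `S(A) ≤ ∫_A g dμ` for some nonnegative `g ∈ L¹_μ(Ω)`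
    (g : X → ℝ) (hg0 : ∀ x, 0 ≤ g x) (hgint : IntegrableOn g Ω μ)
    (hdom : ∀ A : Set X, IsOpen A → A ⊆ Ω → S A ≤ ENNReal.ofReal (∫ x in A, g x ∂μ)) :
    ∃ lam : X → ℝ, (∀ x, 0 ≤ lam x) ∧ IntegrableOn lam Ω μ ∧
      (∀ A : Set X, IsOpen A → A ⊆ Ω → S A = ENNReal.ofReal (∫ x in A, lam x ∂μ)) ∧
      (∀ᵐ x ∂μ.restrict Ω,
        Tendsto (fun ρ : ℝ => S (Metric.ball x ρ) / μ (Metric.ball x ρ))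
          (𝓝[>] 0) (𝓝 (ENNReal.ofReal (lam x)))) := by
  have : SecondCountableTopology X := UniformSpace.secondCountable_of_separable X
  set μg := (μ.restrict Ω).withDensity fun x => ENNReal.ofReal (g x)
  have : IsFiniteMeasure μg := isFiniteMeasure_withDensity_ofReal hgint.2
  have hSμg : ∀ A : Set X, IsOpen A → A ⊆ Ω → S A ≤ μg A := fun A hA hAΩ => by
    rw [withDensity_apply' _ A, Measure.restrict_restrict_of_subset hAΩ,
      ← ofReal_integral_eq_lintegral_ofReal (hgint.mono_set hAΩ) (.of_forall hg0)]
    exact hdom A hA hAΩ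
  obtain ⟨ν, hνμg, hνS⟩ := exists_measure_le_eq_on_isOpen hΩopen μg hmono hsuper hsub hSμg
  have : IsFiniteMeasure ν := isFiniteMeasure_of_le μg hνμg
  have hν : ν ≪ μ.restrict Ω :=
    (Measure.absolutelyContinuous_of_le hνμg).trans (withDensity_absolutelyContinuous _ _)
  set lam := fun x => (ν.rnDeriv (μ.restrict Ω) x).toReal
  have hlam : IntegrableOn lam Ω μ := Measure.integrable_toReal_rnDeriv
  have hlam0 : ∀ x, 0 ≤ lam x := fun _ => toReal_nonneg
  have hrep : ∀ A : Set X, IsOpen A → A ⊆ Ω → S A = ENNReal.ofReal (∫ x in A, lam x ∂μ) :=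
    fun A hA hAΩ => by
      rw [← hνS A hA hAΩ, ← Measure.restrict_restrict_of_subset hAΩ,
        Measure.setIntegral_toReal_rnDeriv hν, ofReal_measureReal]
  refine ⟨lam, hlam0, hlam, hrep, ?_⟩
  filter_upwards [ae_restrict_mem hΩopen.measurableSet,
    ae_tendsto_setAverage_ball hΩopen hdoubling hlam] with x hxΩ hx
  refine (ENNReal.tendsto_ofReal hx).congr' ?_
  filter_upwards [nhdsWithin_le_nhds (eventually_ball_subset (hΩopen.mem_nhds hxΩ))] with ρ hρ
  rw [hrep _ isOpen_ball hρ, ofReal_setAverage (hlam.mono_set hρ) (.of_forall hlam0),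
    ofReal_integral_eq_lintegral_ofReal (hlam.mono_set hρ) (.of_forall hlam0)]

/-- Integral representation of an increasing, superadditive, subadditive set
function dominated by `g dμ` on the open subsets of `Ω` (cf. Lemma 4.1): there is a
nonnegative `λ ∈ L¹_μ(Ω)` with `S(A) = ∫_A λ dμ` for every open `A ⊆ Ω`, and for `μ`-a.e.
`x ∈ Ω` the limit `lim_{ρ→0} S(Q_ρ(x))/μ(Q_ρ(x))` exists and equals `λ(x)`. -/
theorem integral_representation_of_set_function
    {X : Type*} [MetricSpace X] [MeasurableSpace X] [BorelSpace X]
    [CompleteSpace X] [TopologicalSpace.SeparableSpace X] [LocallyCompactSpace X]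
    -- `(X,d)` is a length space
    (hlength : ∀ x y : X, edist x y =
      ⨅ (γ : ℝ → X) (_ : ContinuousOn γ (Set.Icc 0 1)) (_ : γ 0 = x) (_ : γ 1 = y),
        eVariationOn γ (Set.Icc 0 1))
    -- `Ω ⊆ X` is a bounded open set
    (Ω : Set X) (hΩopen : IsOpen Ω) (hΩbd : Bornology.IsBounded Ω)
    -- `μ` is a positive Radon measure on `X`, doubling on `Ω`
    (μ : Measure X) [μ.Regular]
    (Cd : ℝ≥0) (hCd : 1 ≤ Cd)
    (hdoubling : ∀ x ∈ Ω, ∀ ρ : ℝ, 0 < ρ →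
      μ (Metric.ball x ρ) ≤ Cd * μ (Metric.ball x (ρ / 2)))
    -- `S` is an increasing set function on the open subsets of `Ω` with `S(∅) = 0`
    (S : Set X → ℝ≥0∞)
    (hmono : ∀ A B : Set X, IsOpen A → IsOpen B → A ⊆ B → B ⊆ Ω → S A ≤ S B)
    (hempty : S ∅ = 0)
    -- `S` is superadditive
    (hsuper : ∀ A B : Set X, IsOpen A → IsOpen B → A ⊆ Ω → B ⊆ Ω → Disjoint A B →
      S A + S B ≤ S (A ∪ B))
    -- `S` is subadditive
    (hsub : ∀ A B : Set X, IsOpen A → IsOpen B → A ⊆ Ω → B ⊆ Ω → S (A ∪ B) ≤ S A + S B)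
    -- `S(A) ≤ ∫_A g dμ` for some nonnegative `g ∈ L¹_μ(Ω)`
    (g : X → ℝ) (hg0 : ∀ x, 0 ≤ g x) (hgint : IntegrableOn g Ω μ)
    (hdom : ∀ A : Set X, IsOpen A → A ⊆ Ω → S A ≤ ENNReal.ofReal (∫ x in A, g x ∂μ)) :
    ∃ lam : X → ℝ, (∀ x, 0 ≤ lam x) ∧ IntegrableOn lam Ω μ ∧
      (∀ A : Set X, IsOpen A → A ⊆ Ω → S A = ENNReal.ofReal (∫ x in A, lam x ∂μ)) ∧
      (∀ᵐ x ∂μ.restrict Ω,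
        Tendsto (fun ρ : ℝ => S (Metric.ball x ρ) / μ (Metric.ball x ρ))
          (𝓝[>] 0) (𝓝 (ENNReal.ofReal (lam x)))) :=
  integral_representation_of_set_function_general Ω hΩopen μ Cd hdoubling S hmono hsuper hsub g hg0
    hgint hdom
end
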